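/- arXiv:2003.08417 — 3 statements merged into one kernel-verified Lean document; each statement's English description precedes it below -/
import Mathlib

section
/- Let n ≥ 1 be a natural number and let ε ∈ [0,1] be real. Then for all real numbers F ≥ 0 and G ≥ 0 with G ≥ e^{-ε}·F, one has ((1-ε)·G^{1/n} + ε·(2^n·F)^{1/n})^n ≥ (1 + ε²/n)·F. -/
/-! Put `t = F^{1/n}`. Then `(2^n F)^{1/n} = 2t`, while `G^{1/n} ≥ e^{-ε/n} t ≥ (1 - ε/n) t`,
so the base is at least `((1-ε)(1-ε/n) + 2ε) t = (1 + ε²/n + ε(1 - 1/n)) t ≥ (1 + ε²/n) t`.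
Raising to the `n`-th power gives `(1 + ε²/n)^n F ≥ (1 + ε²/n) F`. -/

namespace Real

theorem one_sub_mul_mul_rpow_le_rpow {ε r F G : ℝ} (hr : 0 ≤ r) (hF : 0 ≤ F)
    (hGF : exp (-ε) * F ≤ G) : (1 - ε * r) * F ^ r ≤ G ^ r :=
  calc (1 - ε * r) * F ^ r
      ≤ exp (-ε * r) * F ^ r := by
        gcongr
        linarith [add_one_le_exp (-ε * r)]
    _ = (exp (-ε) * F) ^ r := by rw [mul_rpow (exp_pos _).le hF, exp_mul]
    _ ≤ G ^ r := by gcongr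

theorem pow_mul_rpow_one_div {a x : ℝ} (ha : 0 ≤ a) (hx : 0 ≤ x) {n : ℕ} (hn : n ≠ 0) :
    (a ^ n * x) ^ ((1 : ℝ) / n) = a * x ^ ((1 : ℝ) / n) := by
  rw [mul_rpow (pow_nonneg ha n) hx, one_div, pow_rpow_inv_natCast ha hn]

theorem one_add_sq_mul_mul_le {ε r t g : ℝ} (hε0 : 0 ≤ ε) (hε1 : ε ≤ 1) (hr : r ≤ 1)
    (ht : 0 ≤ t) (hg : (1 - ε * r) * t ≤ g) :
    (1 + ε ^ 2 * r) * t ≤ (1 - ε) * g + ε * (2 * t) := by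
  have hgap : 0 ≤ ε * (1 - r) * t := by have := sub_nonneg.2 hr; positivity
  nlinarith [mul_le_mul_of_nonneg_left hg (sub_nonneg.2 hε1)]

end Real

theorem stmt_0_general (n : ℕ) (hn : 1 ≤ n) (ε : ℝ) (hε0 : 0 ≤ ε) (hε1 : ε ≤ 1)
    (F G : ℝ) (hF : 0 ≤ F) (hGF : Real.exp (-ε) * F ≤ G) :
    (1 + ε ^ 2 / (n : ℝ)) * F ≤
      ((1 - ε) * G ^ ((1 : ℝ) / n) + ε * ((2 ^ n * F) ^ ((1 : ℝ) / n))) ^ n := by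
  have hn0 : n ≠ 0 := by omega
  set t := F ^ ((1 : ℝ) / n) with ht
  have ht0 : 0 ≤ t := Real.rpow_nonneg hF _
  have hr : (1 : ℝ) / n ≤ 1 := div_le_one_of_le₀ (by exact_mod_cast hn) (Nat.cast_nonneg n)
  have hbase : (1 + ε ^ 2 / n) * t ≤ (1 - ε) * G ^ ((1 : ℝ) / n) + ε * (2 * t) := by
    simpa only [mul_one_div] using Real.one_add_sq_mul_mul_le hε0 hε1 hr ht0
      (Real.one_sub_mul_mul_rpow_le_rpow (by positivity) hF hGF)
  have htn : t ^ n = F := by rw [ht, one_div, Real.rpow_inv_natCast_pow hF hn0]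
  calc (1 + ε ^ 2 / n) * F
      ≤ (1 + ε ^ 2 / n) ^ n * F := by
        gcongr
        exact le_self_pow₀ (le_add_of_nonneg_right (by positivity)) hn0
    _ = ((1 + ε ^ 2 / n) * t) ^ n := by rw [mul_pow, htn]
    _ ≤ _ := by
        rw [Real.pow_mul_rpow_one_div zero_le_two hF hn0]
        gcongr

/-- For `n ≥ 1`, `ε ∈ [0,1]`, and reals `F, G ≥ 0` with `G ≥ e^{-ε}·F`,
one has `((1-ε)·G^{1/n} + ε·(2^n·F)^{1/n})^n ≥ (1 + ε²/n)·F`. -/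
theorem stmt_0 (n : ℕ) (hn : 1 ≤ n) (ε : ℝ) (hε0 : 0 ≤ ε) (hε1 : ε ≤ 1)
    (F G : ℝ) (hF : 0 ≤ F) (hG : 0 ≤ G) (hGF : Real.exp (-ε) * F ≤ G) :
    (1 + ε ^ 2 / (n : ℝ)) * F ≤
      ((1 - ε) * G ^ ((1 : ℝ) / n) + ε * ((2 ^ n * F) ^ ((1 : ℝ) / n))) ^ n :=
  stmt_0_general n hn ε hε0 hε1 F G hF hGF
end

section
/- Let n ≥ 1 be a natural number and let δ ∈ [0,1] be real. Then for all real numbers h ≥ 0 and f ≥ 0 with f ≥ 2^{-δ}·h, one has ((1-δ)·f^{1/n} + δ·(2h)^{1/n})^n ≥ (1 + δ²·(log 2)/n)·h. In particular ((1-δ)·2^{-δ/n} + 2^{1/n}·δ)^n ≥ 1 + δ²·(log 2)/n. -/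
/-!
With `c = (1-δ)·2^{-δ/n} + δ·2^{1/n}`, weighted AM-GM gives `c ≥ 2^{(1-δ)(-δ/n) + δ/n} = 2^{δ²/n}`,
hence `c^n ≥ 2^{δ²} = e^{δ² log 2} ≥ 1 + δ² log 2`. For the first inequality, `f^{1/n} ≥ 2^{-δ/n} h^{1/n}`
and `(2h)^{1/n} = 2^{1/n} h^{1/n}`, so the left-hand base is at least `c·h^{1/n}`, whose `n`-th
power is `c^n·h`.
-/

open Real

lemma one_add_mul_log_le_rpow {a : ℝ} (ha : 0 < a) (x : ℝ) : 1 + x * log a ≤ a ^ x := by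
  rw [rpow_def_of_pos ha, mul_comm]
  linarith [add_one_le_exp (log a * x)]

section ConvexCombination

variable {a δ : ℝ}

lemma rpow_sq_div_le_convex_comb (hδ0 : 0 ≤ δ) (hδ1 : δ ≤ 1) (ha : 0 < a) (s : ℝ) :
    a ^ (δ ^ 2 / s) ≤ (1 - δ) * a ^ (-δ / s) + a ^ (1 / s) * δ :=
  calc a ^ (δ ^ 2 / s) = (a ^ (-δ / s)) ^ (1 - δ) * (a ^ (1 / s)) ^ δ := by
        rw [← rpow_mul ha.le, ← rpow_mul ha.le, ← rpow_add ha]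
        ring_nf
    _ ≤ (1 - δ) * a ^ (-δ / s) + δ * a ^ (1 / s) :=
        geom_mean_le_arith_mean2_weighted (by linarith) hδ0 (by positivity) (by positivity)
          (by ring)
    _ = (1 - δ) * a ^ (-δ / s) + a ^ (1 / s) * δ := by ring

lemma one_add_sq_mul_log_div_le_pow (hδ0 : 0 ≤ δ) (hδ1 : δ ≤ 1) (ha : 1 ≤ a) {n : ℕ}
    (hn : 1 ≤ n) :
    1 + δ ^ 2 * log a / n ≤ ((1 - δ) * a ^ (-δ / n) + a ^ ((1 : ℝ) / n) * δ) ^ n := by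
  have hn0 : (n : ℝ) ≠ 0 := by positivity
  have ha0 : 0 < a := by linarith
  calc 1 + δ ^ 2 * log a / n ≤ 1 + δ ^ 2 * log a := by
        gcongr
        exact div_le_self (by positivity [log_nonneg ha]) (by exact_mod_cast hn)
    _ ≤ a ^ (δ ^ 2) := one_add_mul_log_le_rpow ha0 _
    _ = (a ^ (δ ^ 2 / n)) ^ n := by rw [← rpow_mul_natCast ha0.le, div_mul_cancel₀ _ hn0]
    _ ≤ ((1 - δ) * a ^ (-δ / n) + a ^ ((1 : ℝ) / n) * δ) ^ n :=
        pow_le_pow_left₀ (by positivity) (rpow_sq_div_le_convex_comb hδ0 hδ1 ha0 n) n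

lemma pow_convex_comb_mul_le {h f : ℝ} (hδ0 : 0 ≤ δ) (hδ1 : δ ≤ 1) (ha : 0 < a) (hh : 0 ≤ h)
    (hfh : a ^ (-δ) * h ≤ f) {n : ℕ} (hn : n ≠ 0) :
    ((1 - δ) * a ^ (-δ / n) + a ^ ((1 : ℝ) / n) * δ) ^ n * h ≤
      ((1 - δ) * f ^ ((1 : ℝ) / n) + δ * (a * h) ^ ((1 : ℝ) / n)) ^ n := by
  have hroot : ∀ x : ℝ, a ^ (x / n) * h ^ ((1 : ℝ) / n) = (a ^ x * h) ^ ((1 : ℝ) / n) := by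
    intro x
    rw [mul_rpow (by positivity) hh, ← rpow_mul ha.le, mul_one_div]
  calc ((1 - δ) * a ^ (-δ / n) + a ^ ((1 : ℝ) / n) * δ) ^ n * h
      = (((1 - δ) * a ^ (-δ / n) + a ^ ((1 : ℝ) / n) * δ) * h ^ ((1 : ℝ) / n)) ^ n := by
        rw [mul_pow, one_div, rpow_inv_natCast_pow hh hn]
    _ = ((1 - δ) * (a ^ (-δ) * h) ^ ((1 : ℝ) / n) + δ * (a * h) ^ ((1 : ℝ) / n)) ^ n := by
        rw [← hroot, ← rpow_one a, ← hroot, rpow_one]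
        ring
    _ ≤ ((1 - δ) * f ^ ((1 : ℝ) / n) + δ * (a * h) ^ ((1 : ℝ) / n)) ^ n := by
        have hδ' : 0 ≤ 1 - δ := by linarith
        gcongr

end ConvexCombination

theorem stmt_1_general (n : ℕ) (hn : 1 ≤ n) (δ : ℝ) (hδ0 : 0 ≤ δ) (hδ1 : δ ≤ 1)
    (h f : ℝ) (hh : 0 ≤ h) (hfh : (2 : ℝ) ^ (-δ) * h ≤ f) :
    (1 + δ ^ 2 * Real.log 2 / (n : ℝ)) * h ≤
      ((1 - δ) * f ^ ((1 : ℝ) / n) + δ * ((2 * h) ^ ((1 : ℝ) / n))) ^ n ∧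
    1 + δ ^ 2 * Real.log 2 / (n : ℝ) ≤
      ((1 - δ) * (2 : ℝ) ^ (-δ / (n : ℝ)) + (2 : ℝ) ^ ((1 : ℝ) / n) * δ) ^ n := by
  have hscalar := one_add_sq_mul_log_div_le_pow hδ0 hδ1 one_le_two hn
  refine ⟨?_, hscalar⟩
  calc (1 + δ ^ 2 * Real.log 2 / (n : ℝ)) * h
      ≤ ((1 - δ) * (2 : ℝ) ^ (-δ / (n : ℝ)) + (2 : ℝ) ^ ((1 : ℝ) / n) * δ) ^ n * h :=
        mul_le_mul_of_nonneg_right hscalar hh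
    _ ≤ ((1 - δ) * f ^ ((1 : ℝ) / n) + δ * ((2 * h) ^ ((1 : ℝ) / n))) ^ n :=
        pow_convex_comb_mul_le hδ0 hδ1 two_pos hh hfh (by omega)

/-- For `n ≥ 1`, `δ ∈ [0,1]`, and reals `h, f ≥ 0` with `f ≥ 2^{-δ}·h`,
one has `((1-δ)·f^{1/n} + δ·(2h)^{1/n})^n ≥ (1 + δ²·log 2/n)·h`; in particular
`((1-δ)·2^{-δ/n} + 2^{1/n}·δ)^n ≥ 1 + δ²·log 2/n`. -/
theorem stmt_1 (n : ℕ) (hn : 1 ≤ n) (δ : ℝ) (hδ0 : 0 ≤ δ) (hδ1 : δ ≤ 1)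
    (h f : ℝ) (hh : 0 ≤ h) (hf : 0 ≤ f) (hfh : (2 : ℝ) ^ (-δ) * h ≤ f) :
    (1 + δ ^ 2 * Real.log 2 / (n : ℝ)) * h ≤
      ((1 - δ) * f ^ ((1 : ℝ) / n) + δ * ((2 * h) ^ ((1 : ℝ) / n))) ^ n ∧
    1 + δ ^ 2 * Real.log 2 / (n : ℝ) ≤
      ((1 - δ) * (2 : ℝ) ^ (-δ / (n : ℝ)) + (2 : ℝ) ^ ((1 : ℝ) / n) * δ) ^ n :=
  stmt_1_general n hn δ hδ0 hδ1 h f hh hfh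
end

section
/- Let δ ∈ (0,1], K ≥ 0, c > 0 and M > 0 be real numbers with 4·K·δ ≤ M, and set s := exp(−5M/c). Let φ : ℝ → ℝ be a function such that t ↦ φ(t) + K·t² is nondecreasing on [0, δ], and assume φ(s·δ) ≥ φ(0) + 5M. Then for every t with 0 < t ≤ δ one has φ(t) + K·(t² − δ²) + K·(t − δ) − c·log(t/δ) ≥ φ(0) + 4M. -/
/-!
With `ψ t = φ t + K t²` nondecreasing, split at `t = sδ`. For `t ≥ sδ` monotonicity gives
`ψ t ≥ ψ (sδ) ≥ φ 0 + 5M` and the logarithmic term is nonnegative; for `t < sδ` it only gives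
`ψ t ≥ φ 0`, but then `-c log (t/δ) > -c log s = 5M`. The remaining quadratic and linear terms in
`K` cost at most `2Kδ ≤ M/2`.
-/

open Real Set

theorem le_sub_mul_log_div_of_monotoneOn {ψ : ℝ → ℝ} {δ c s a t : ℝ}
    (hψ : MonotoneOn ψ (Icc 0 δ)) (hc : 0 < c) (hs : 0 < s)
    (ha : a ≤ ψ (s * δ)) (ha₀ : a + c * log s ≤ ψ 0) (ht₀ : 0 < t) (htδ : t ≤ δ) :
    a ≤ ψ t - c * log (t / δ) := by
  have hδ : 0 < δ := ht₀.trans_le htδ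
  have ht : t ∈ Icc 0 δ := ⟨ht₀.le, htδ⟩
  rcases le_or_gt (s * δ) t with hst | hst
  · have hlog : log (t / δ) ≤ 0 :=
      log_nonpos (by positivity) (div_le_one_of_le₀ htδ hδ.le)
    have hψt : ψ (s * δ) ≤ ψ t := hψ ⟨by positivity, hst.trans htδ⟩ ht hst
    linarith [mul_nonneg hc.le (neg_nonneg.mpr hlog)]
  · have hlog : log (t / δ) < log s :=
      log_lt_log (by positivity) ((div_lt_iff₀ hδ).mpr hst)
    have hψt : ψ 0 ≤ ψ t := hψ ⟨le_rfl, hδ.le⟩ ht ht₀.le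
    linarith [mul_lt_mul_of_pos_left hlog hc]

theorem stmt_3_general (δ K c M : ℝ) (hδ0 : 0 < δ) (hδ1 : δ ≤ 1) (hK : 0 ≤ K) (hc : 0 < c)
    (hKδ : 4 * K * δ ≤ M) (s : ℝ) (hs : s = Real.exp (-(5 * M) / c))
    (φ : ℝ → ℝ) (hφ : MonotoneOn (fun t => φ t + K * t ^ 2) (Set.Icc 0 δ))
    (hφs : φ 0 + 5 * M ≤ φ (s * δ)) :
    ∀ t : ℝ, 0 < t → t ≤ δ →
      φ 0 + 4 * M ≤ φ t + K * (t ^ 2 - δ ^ 2) + K * (t - δ) - c * Real.log (t / δ) := by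
  intro t ht₀ htδ
  have hc_log_s : c * log s = -(5 * M) := by
    rw [hs, log_exp]
    field_simp
  have key := le_sub_mul_log_div_of_monotoneOn (a := φ 0 + 5 * M) hφ hc (hs ▸ exp_pos _)
    (by linarith [mul_nonneg hK (sq_nonneg (s * δ))]) (by simp [hc_log_s]) ht₀ htδ
  have hKδ_sq : K * δ ^ 2 ≤ K * δ := by nlinarith [mul_nonneg hK hδ0.le]
  linarith [mul_nonneg hK ht₀.le, mul_nonneg hK hδ0.le]

/-- elementary estimate for the Kiselman–Legendre transform. -/
theorem stmt_3 (δ K c M : ℝ) (hδ0 : 0 < δ) (hδ1 : δ ≤ 1) (hK : 0 ≤ K) (hc : 0 < c)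
    (hM : 0 < M) (hKδ : 4 * K * δ ≤ M) (s : ℝ) (hs : s = Real.exp (-(5 * M) / c))
    (φ : ℝ → ℝ) (hφ : MonotoneOn (fun t => φ t + K * t ^ 2) (Set.Icc 0 δ))
    (hφs : φ 0 + 5 * M ≤ φ (s * δ)) :
    ∀ t : ℝ, 0 < t → t ≤ δ →
      φ 0 + 4 * M ≤ φ t + K * (t ^ 2 - δ ^ 2) + K * (t - δ) - c * Real.log (t / δ) :=
  stmt_3_general δ K c M hδ0 hδ1 hK hc hKδ s hs φ hφ hφs
end
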